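/- Let n ≥ 0 be an integer and let λ ∈ ℚ be written as λ = a + c/b with a ∈ ℤ, b ∈ ℕ, 0 < c < b, gcd(c,b) = 1, and suppose b > n+1. Then: (i) the least rational number r with r ≥ λ and denominator (in lowest terms) at most n+1 equals a + min_{1 ≤ d ≤ n+1} ( ⌈(cd+1)/b⌉ / d ); and (ii) the greatest rational number r with r ≤ λ and denominator at most n+1 equals a + max_{1 ≤ d ≤ n+1} ( ⌊(cd−1)/b⌋ / d ). Here ⌈·⌉ and ⌊·⌋ denote rounding up and down to the nearest integer. -/

import Mathlib

/-!
The least rational `≥ x` whose denominator divides `d` is `⌈x d⌉ / d`, so the least rational `≥ x`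
with denominator at most `N` is the minimum of these over `1 ≤ d ≤ N`. For `x = a + c / b` with
`c` coprime to `b` and `d < b`, the number `x d` is never an integer, which is what allows
replacing `⌈c d / b⌉` by `⌈(c d + 1) / b⌉`. The floor is dual.
-/

namespace Rat

theorem den_intCast_div_natCast_le (k : ℤ) {d : ℕ} (hd : 0 < d) : ((k : ℚ) / d).den ≤ d := by
  have h : (((k : ℚ) / d).den : ℤ) ∣ d := by simpa [Rat.divInt_eq_div] using Rat.den_dvd k d
  exact Nat.le_of_dvd hd (by exact_mod_cast h)

theorem le_ceil_mul_div (x : ℚ) {d : ℕ} (hd : 0 < d) : x ≤ (⌈x * d⌉ : ℚ) / d := by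
  rw [le_div_iff₀ (by exact_mod_cast hd)]
  exact Int.le_ceil _

theorem floor_mul_div_le (x : ℚ) {d : ℕ} (hd : 0 < d) : (⌊x * d⌋ : ℚ) / d ≤ x := by
  rw [div_le_iff₀ (by exact_mod_cast hd)]
  exact Int.floor_le _

theorem ceil_mul_den_div_den_le {x r : ℚ} (h : x ≤ r) : (⌈x * r.den⌉ : ℚ) / r.den ≤ r := by
  have hceil : ⌈x * r.den⌉ ≤ r.num := by
    rw [Int.ceil_le, ← mul_den_eq_num]
    gcongr
  rw [div_le_iff₀ (by exact_mod_cast r.pos), mul_den_eq_num]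
  exact_mod_cast hceil

theorem le_floor_mul_den_div_den {x r : ℚ} (h : r ≤ x) : r ≤ (⌊x * r.den⌋ : ℚ) / r.den := by
  have hfloor : r.num ≤ ⌊x * r.den⌋ := by
    rw [Int.le_floor, ← mul_den_eq_num]
    gcongr
  rw [le_div_iff₀ (by exact_mod_cast r.pos), mul_den_eq_num]
  exact_mod_cast hfloor

theorem isLeast_setOf_le_den_le (x : ℚ) {N : ℕ} (hN : 1 ≤ N) :
    IsLeast {r : ℚ | x ≤ r ∧ r.den ≤ N}
      (((Finset.Icc 1 N).image fun d : ℕ => (⌈x * d⌉ : ℚ) / d).min'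
        ((Finset.nonempty_Icc.mpr hN).image _)) := by
  set f : ℕ → ℚ := fun d => (⌈x * d⌉ : ℚ) / d
  refine ⟨?_, fun r ⟨hxr, hr⟩ => ?_⟩
  · obtain ⟨d, hd, hd_eq⟩ := Finset.mem_image.mp (Finset.min'_mem ((Finset.Icc 1 N).image f) _)
    rw [Finset.mem_Icc] at hd
    rw [← hd_eq]
    exact ⟨le_ceil_mul_div x hd.1, (den_intCast_div_natCast_le _ hd.1).trans hd.2⟩
  · exact (Finset.min'_le _ _ (Finset.mem_image_of_mem f (Finset.mem_Icc.mpr ⟨r.pos, hr⟩))).trans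
      (ceil_mul_den_div_den_le hxr)

theorem isGreatest_setOf_le_den_le (x : ℚ) {N : ℕ} (hN : 1 ≤ N) :
    IsGreatest {r : ℚ | r ≤ x ∧ r.den ≤ N}
      (((Finset.Icc 1 N).image fun d : ℕ => (⌊x * d⌋ : ℚ) / d).max'
        ((Finset.nonempty_Icc.mpr hN).image _)) := by
  set f : ℕ → ℚ := fun d => (⌊x * d⌋ : ℚ) / d
  refine ⟨?_, fun r ⟨hrx, hr⟩ => ?_⟩
  · obtain ⟨d, hd, hd_eq⟩ := Finset.mem_image.mp (Finset.max'_mem ((Finset.Icc 1 N).image f) _)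
    rw [Finset.mem_Icc] at hd
    rw [← hd_eq]
    exact ⟨floor_mul_div_le x hd.1, (den_intCast_div_natCast_le _ hd.1).trans hd.2⟩
  · exact (le_floor_mul_den_div_den hrx).trans
      (Finset.le_max' _ _ (Finset.mem_image_of_mem f (Finset.mem_Icc.mpr ⟨r.pos, hr⟩)))

end Rat

theorem Int.ceil_add_one_div_natCast {m : ℤ} {b : ℕ} (hb : 0 < b) (h : ¬ (b : ℤ) ∣ m) :
    ⌈((m : ℚ) + 1) / b⌉ = ⌈(m : ℚ) / b⌉ := by
  have hb' : (0 : ℚ) < b := by exact_mod_cast hb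
  refine le_antisymm ?_ (Int.ceil_mono (by gcongr; linarith))
  have hle : m ≤ ⌈(m : ℚ) / b⌉ * b := by
    have := Int.le_ceil ((m : ℚ) / b)
    rw [div_le_iff₀ hb'] at this
    exact_mod_cast this
  have hne : m ≠ ⌈(m : ℚ) / b⌉ * b := fun heq => h ⟨_, heq.trans (mul_comm _ _)⟩
  rw [Int.ceil_le, div_le_iff₀ hb']
  exact_mod_cast (show m + 1 ≤ ⌈(m : ℚ) / b⌉ * b by omega)

theorem Int.floor_sub_one_div_natCast {m : ℤ} {b : ℕ} (hb : 0 < b) (h : ¬ (b : ℤ) ∣ m) :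
    ⌊((m : ℚ) - 1) / b⌋ = ⌊(m : ℚ) / b⌋ := by
  have hb' : (0 : ℚ) < b := by exact_mod_cast hb
  refine le_antisymm (Int.floor_mono (by gcongr; linarith)) ?_
  have hle : ⌊(m : ℚ) / b⌋ * b ≤ m := by
    have := Int.floor_le ((m : ℚ) / b)
    rw [le_div_iff₀ hb'] at this
    exact_mod_cast this
  have hne : ⌊(m : ℚ) / b⌋ * b ≠ m := fun heq => h ⟨_, heq.symm.trans (mul_comm _ _)⟩
  rw [Int.le_floor, le_div_iff₀ hb']
  exact_mod_cast (show ⌊(m : ℚ) / b⌋ * b ≤ m - 1 by omega)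

theorem ceil_add_div_mul_div_eq {a : ℤ} {b c d : ℕ} (hb : 0 < b) (hd : 0 < d) (h : ¬ b ∣ c * d) :
    (⌈((a : ℚ) + c / b) * d⌉ : ℚ) / d = a + ⌈((c : ℚ) * d + 1) / b⌉ / d := by
  have hsplit : ((a : ℚ) + c / b) * d = ((a * d : ℤ) : ℚ) + (((c * d : ℕ) : ℤ) : ℚ) / b := by
    push_cast; ring
  rw [hsplit, Int.ceil_intCast_add, ← Int.ceil_add_one_div_natCast hb (by exact_mod_cast h)]
  push_cast
  field_simp

theorem floor_add_div_mul_div_eq {a : ℤ} {b c d : ℕ} (hb : 0 < b) (hd : 0 < d) (h : ¬ b ∣ c * d) :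
    (⌊((a : ℚ) + c / b) * d⌋ : ℚ) / d = a + ⌊((c : ℚ) * d - 1) / b⌋ / d := by
  have hsplit : ((a : ℚ) + c / b) * d = ((a * d : ℤ) : ℚ) + (((c * d : ℕ) : ℤ) : ℚ) / b := by
    push_cast; ring
  rw [hsplit, Int.floor_intCast_add, ← Int.floor_sub_one_div_natCast hb (by exact_mod_cast h)]
  push_cast
  field_simp

theorem Nat.not_dvd_mul_of_coprime {b c d : ℕ} (hcb : Nat.Coprime c b) (hd : 0 < d) (hdb : d < b) :
    ¬ b ∣ c * d := fun h => Nat.not_dvd_of_pos_of_lt hd hdb (hcb.symm.dvd_of_dvd_mul_left h)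

theorem stmt15 (n : ℕ) (a : ℤ) (b c : ℕ)
    (hgcd : Nat.gcd c b = 1) (hbn : n + 1 < b) :
    IsLeast {r : ℚ | (a : ℚ) + (c : ℚ) / (b : ℚ) ≤ r ∧ r.den ≤ n + 1}
      ((a : ℚ) +
        ((Finset.Icc 1 (n + 1)).image fun d : ℕ =>
            ((⌈((c : ℚ) * (d : ℚ) + 1) / (b : ℚ)⌉ : ℚ) / (d : ℚ))).min'
          ((Finset.nonempty_Icc.mpr (by omega)).image _)) ∧
    IsGreatest {r : ℚ | r ≤ (a : ℚ) + (c : ℚ) / (b : ℚ) ∧ r.den ≤ n + 1}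
      ((a : ℚ) +
        ((Finset.Icc 1 (n + 1)).image fun d : ℕ =>
            ((⌊((c : ℚ) * (d : ℚ) - 1) / (b : ℚ)⌋ : ℚ) / (d : ℚ))).max'
          ((Finset.nonempty_Icc.mpr (by omega)).image _)) := by
  have hb : 0 < b := by omega
  have hnd : ∀ d ∈ Finset.Icc 1 (n + 1), 0 < d ∧ ¬ b ∣ c * d := fun d hd => by
    rw [Finset.mem_Icc] at hd
    exact ⟨hd.1, Nat.not_dvd_mul_of_coprime hgcd hd.1 (by omega)⟩
  constructor
  · convert Rat.isLeast_setOf_le_den_le ((a : ℚ) + c / b) (N := n + 1) (by omega) using 1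
    rw [(add_right_mono (a := (a : ℚ))).map_finset_min']
    congr 1
    rw [Finset.image_image]
    exact Finset.image_congr fun d hd =>
      (ceil_add_div_mul_div_eq hb (hnd d hd).1 (hnd d hd).2).symm
  · convert Rat.isGreatest_setOf_le_den_le ((a : ℚ) + c / b) (N := n + 1) (by omega) using 1
    rw [(add_right_mono (a := (a : ℚ))).map_finset_max']
    congr 1
    rw [Finset.image_image]
    exact Finset.image_congr fun d hd =>
      (floor_add_div_mul_div_eq hb (hnd d hd).1 (hnd d hd).2).symm
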